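/- Combining the dual perturbation bounds: under the hypotheses that ℓ is β-strongly smooth and convex, K, K̂ PSD, F (1/(Tβ))-strongly convex, and Δ = (1/(λT))(K̂-K)α*, the minimizers of the two kernel-regularized duals satisfy (1/(λ²T²)) (α̂* - α*)ᵀ K̂ (α̂* - α*) ≤ (2β/λ) ‖Δ‖_∞². -/

import Mathlib

/-!
Testing each of the two problems against the segment towards the other minimizer and
letting the step tend to `0` gives first-order optimality conditions; in their sum the
values of `F` cancel, and strong convexity leaves, for `d = α̂* - α*`,
`‖d‖₂² / (Tβ) + dᵀK̂d / (λT²) ≤ -(1/T) ⟪d, Δ⟫ ≤ (1/T) ‖d‖₁ ‖Δ‖_∞`.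
The first term and `‖d‖₁² ≤ T ‖d‖₂²` give `‖d‖₁ ≤ Tβ ‖Δ‖_∞`, which the second term
turns into the claim.
-/

open Filter Topology Matrix

theorem nonneg_of_forall_nonneg_add_mul {a b : ℝ}
    (h : ∀ t : ℝ, 0 < t → t ≤ 1 → 0 ≤ a + t * b) : 0 ≤ a := by
  have hlim : Tendsto (fun t : ℝ => a + t * b) (𝓝[>] 0) (𝓝 a) := by
    have : Continuous fun t : ℝ => a + t * b := by fun_prop
    simpa using (this.tendsto 0).mono_left nhdsWithin_le_nhds
  refine ge_of_tendsto hlim ?_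
  filter_upwards [Ioc_mem_nhdsGT one_pos] with t ht using h t ht.1 ht.2

namespace Matrix

variable {n : Type*} [Fintype n]

theorem IsSymm.dotProduct_mulVec_comm {M : Matrix n n ℝ} (hM : M.IsSymm) (a b : n → ℝ) :
    a ⬝ᵥ M *ᵥ b = b ⬝ᵥ M *ᵥ a := by
  rw [dotProduct_mulVec, dotProduct_comm, ← mulVec_transpose, hM.eq]

theorem IsSymm.dotProduct_mulVec_add_smul {M : Matrix n n ℝ} (hM : M.IsSymm) (a d : n → ℝ)
    (t : ℝ) :
    (a + t • d) ⬝ᵥ M *ᵥ (a + t • d) =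
      a ⬝ᵥ M *ᵥ a + 2 * t * (d ⬝ᵥ M *ᵥ a) + t ^ 2 * (d ⬝ᵥ M *ᵥ d) := by
  simp only [mulVec_add, mulVec_smul, dotProduct_add, add_dotProduct, dotProduct_smul,
    smul_dotProduct, smul_eq_mul, hM.dotProduct_mulVec_comm a d]
  ring

theorem abs_dotProduct_le_sum_abs_mul_iSup (v w : n → ℝ) :
    |v ⬝ᵥ w| ≤ (∑ i, |v i|) * ⨆ i, |w i| := by
  calc |v ⬝ᵥ w| ≤ ∑ i, |v i * w i| := Finset.abs_sum_le_sum_abs _ _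
    _ ≤ ∑ i, |v i| * ⨆ j, |w j| := Finset.sum_le_sum fun i _ => by
        rw [abs_mul]
        exact mul_le_mul_of_nonneg_left
          (le_ciSup (Set.finite_range fun j => |w j|).bddAbove i) (abs_nonneg _)
    _ = (∑ i, |v i|) * ⨆ i, |w i| := (Finset.sum_mul _ _ _).symm

end Matrix

section DualPerturbation

variable {n : Type*} [Fintype n]

/-- Strong convexity with modulus `2σ` for the Euclidean norm (Mathlib's `StrongConvexOn`
would use the sup norm of `n → ℝ`). -/
def SumSqStrongConvex (σ : ℝ) (F : (n → ℝ) → ℝ) : Prop :=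
  ∀ u v : n → ℝ, ∀ t : ℝ, 0 ≤ t → t ≤ 1 →
    F (t • u + (1 - t) • v) ≤
      t * F u + (1 - t) * F v - σ * t * (1 - t) * ∑ i, (u i - v i) ^ 2

theorem sum_abs_le_of_sumSq_le {v : n → ℝ} {β M : ℝ} (hβ : 0 ≤ β) (hM : 0 ≤ M)
    (h : ∑ i, v i ^ 2 ≤ β * ((∑ i, |v i|) * M)) :
    ∑ i, |v i| ≤ Fintype.card n * β * M := by
  have hCS : (∑ i, |v i|) ^ 2 ≤ Fintype.card n * ∑ i, v i ^ 2 := by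
    simpa [sq_abs] using sq_sum_le_card_mul_sum_sq (s := Finset.univ) (f := fun i => |v i|)
  rcases (Finset.sum_nonneg fun i _ => abs_nonneg (v i)).eq_or_lt with h₀ | h₀
  · rw [← h₀]; positivity
  · refine le_of_mul_le_mul_left ?_ h₀
    have hcard : (0 : ℝ) ≤ Fintype.card n := Nat.cast_nonneg _
    linarith [mul_le_mul_of_nonneg_left h hcard]

variable {F : (n → ℝ) → ℝ} {σ c : ℝ}

theorem sumSq_le_of_isMin_add_quadForm {M : Matrix n n ℝ} (hM : M.IsSymm)
    (hF : SumSqStrongConvex σ F) {α : n → ℝ}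
    (hα : ∀ γ, F α + c * (α ⬝ᵥ M *ᵥ α) ≤ F γ + c * (γ ⬝ᵥ M *ᵥ γ)) (γ : n → ℝ) :
    σ * ∑ i, (γ i - α i) ^ 2 ≤ F γ - F α + 2 * c * ((γ - α) ⬝ᵥ M *ᵥ α) := by
  set d := γ - α
  set S := ∑ i, (γ i - α i) ^ 2
  rw [← sub_nonneg]
  -- `b` is the coefficient of `t` in the comparison of `α` with `α + t • d`, divided by `t`.
  refine nonneg_of_forall_nonneg_add_mul (b := σ * S + c * (d ⬝ᵥ M *ᵥ d))
    fun t ht₀ ht₁ => ?_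
  have hseg : α + t • d = t • γ + (1 - t) • α := by
    ext i; simp only [d, Pi.add_apply, Pi.smul_apply, Pi.sub_apply, smul_eq_mul]; ring
  have hmin := hα (α + t • d)
  rw [hM.dotProduct_mulVec_add_smul, hseg] at hmin
  have hconv := hF γ α t ht₀.le ht₁
  refine nonneg_of_mul_nonneg_right ?_ ht₀
  linarith

theorem sumSq_add_quadForm_le_of_isMin {K Khat : Matrix n n ℝ} (hK : K.IsSymm)
    (hKhat : Khat.IsSymm) (hF : SumSqStrongConvex σ F) {α αh : n → ℝ}
    (hα : ∀ γ, F α + c * (α ⬝ᵥ K *ᵥ α) ≤ F γ + c * (γ ⬝ᵥ K *ᵥ γ))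
    (hαh : ∀ γ, F αh + c * (αh ⬝ᵥ Khat *ᵥ αh) ≤ F γ + c * (γ ⬝ᵥ Khat *ᵥ γ)) :
    σ * ∑ i, (αh i - α i) ^ 2 + c * ((αh - α) ⬝ᵥ Khat *ᵥ (αh - α)) ≤
      -(c * ((αh - α) ⬝ᵥ (Khat - K) *ᵥ α)) := by
  have h₁ := sumSq_le_of_isMin_add_quadForm hK hF hα αh
  have h₂ := sumSq_le_of_isMin_add_quadForm hKhat hF hαh α
  have hsq : ∑ i, (α i - αh i) ^ 2 = ∑ i, (αh i - α i) ^ 2 :=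
    Finset.sum_congr rfl fun i _ => by ring
  have hcross : (α - αh) ⬝ᵥ Khat *ᵥ αh =
      -((αh - α) ⬝ᵥ Khat *ᵥ α) - (αh - α) ⬝ᵥ Khat *ᵥ (αh - α) := by
    simp only [mulVec_sub, dotProduct_sub, sub_dotProduct]; ring
  rw [hsq, hcross] at h₂
  rw [sub_mulVec, dotProduct_sub]
  linarith

end DualPerturbation

theorem stmt15_general {T : ℕ} (hT : 0 < T) (lam β : ℝ) (hlam : 0 < lam) (hβ : 0 < β)
    (F : (Fin T → ℝ) → ℝ)
    (hFsc : ∀ u v : Fin T → ℝ, ∀ t : ℝ, 0 ≤ t → t ≤ 1 →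
      F (t • u + (1 - t) • v) ≤ t * F u + (1 - t) * F v -
        (1 / (2 * (T : ℝ) * β)) * t * (1 - t) * ∑ i, (u i - v i) ^ 2)
    (K Khat : Matrix (Fin T) (Fin T) ℝ) (hK : K.PosSemidef)
    (hKhat : Khat.PosSemidef)
    (J Jhat : (Fin T → ℝ) → ℝ)
    (hJ : ∀ α, J α = F α + (1 / (2 * lam * (T : ℝ) ^ 2)) *
      dotProduct α (K.mulVec α))
    (hJhat : ∀ α, Jhat α = F α + (1 / (2 * lam * (T : ℝ) ^ 2)) *
      dotProduct α (Khat.mulVec α))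
    (αs : Fin T → ℝ) (hmin : ∀ α, J αs ≤ J α)
    (αh : Fin T → ℝ) (hminh : ∀ α, Jhat αh ≤ Jhat α)
    (Δ : Fin T → ℝ)
    (hΔ : Δ = (1 / (lam * (T : ℝ))) • ((Khat - K).mulVec αs)) :
    (1 / (lam ^ 2 * (T : ℝ) ^ 2)) *
        dotProduct (αh - αs) (Khat.mulVec (αh - αs)) ≤
      (2 * β / lam) * (⨆ t, |Δ t|) ^ 2 := by
  have hT₀ : (0 : ℝ) < T := by exact_mod_cast hT
  set d := αh - αs
  set P := d ⬝ᵥ Khat *ᵥ d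
  set L := ∑ i, |d i|
  set M := ⨆ t, |Δ t|
  have hgap := sumSq_add_quadForm_le_of_isMin (isHermitian_iff_isSymm.mp hK.isHermitian)
    (isHermitian_iff_isSymm.mp hKhat.isHermitian) hFsc
    (fun γ => by rw [← hJ, ← hJ]; exact hmin γ)
    (fun γ => by rw [← hJhat, ← hJhat]; exact hminh γ)
  have hΔd : d ⬝ᵥ (Khat - K) *ᵥ αs = lam * T * (d ⬝ᵥ Δ) := by
    rw [hΔ, dotProduct_smul, smul_eq_mul]
    field_simp
  have hkey : (∑ i, d i ^ 2) / β + P / (lam * T) ≤ L * M := by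
    rw [hΔd] at hgap
    calc (∑ i, d i ^ 2) / β + P / (lam * T)
        = 2 * T * (1 / (2 * T * β) * ∑ i, (αh i - αs i) ^ 2 + 1 / (2 * lam * T ^ 2) * P) := by
          simp only [d, Pi.sub_apply]; field_simp
      _ ≤ 2 * T * -(1 / (2 * lam * T ^ 2) * (lam * T * (d ⬝ᵥ Δ))) := by gcongr
      _ = -(d ⬝ᵥ Δ) := by field_simp
      _ ≤ L * M := (neg_le_abs _).trans (abs_dotProduct_le_sum_abs_mul_iSup d Δ)
  have hM₀ : 0 ≤ M := Real.iSup_nonneg fun i => abs_nonneg _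
  have hL : L ≤ T * β * M := by
    have hP₀ : 0 ≤ P / (lam * T) :=
      div_nonneg (by simpa using hKhat.dotProduct_mulVec_nonneg d) (by positivity)
    simpa using sum_abs_le_of_sumSq_le hβ.le hM₀ <|
      (div_le_iff₀' hβ).mp (le_of_add_le_of_nonneg_left hkey hP₀)
  have hP : P ≤ lam * T * (L * M) := (div_le_iff₀' (by positivity)).mp <|
    le_of_add_le_of_nonneg_right hkey (div_nonneg (Finset.sum_nonneg fun i _ => sq_nonneg _) hβ.le)
  calc (1 / (lam ^ 2 * T ^ 2)) * P
      ≤ (1 / (lam ^ 2 * T ^ 2)) * (lam * T * ((T * β * M) * M)) := by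
        gcongr
        exact hP.trans (by gcongr)
    _ = β / lam * M ^ 2 := by field_simp
    _ ≤ 2 * β / lam * M ^ 2 := by gcongr; linarith

/-- chaining the dual perturbation bounds:
`(1/(λ²T²)) (α̂*-α*)ᵀK̂(α̂*-α*) ≤ (2β/λ)‖Δ‖_∞²`. -/
theorem stmt15 {T : ℕ} (hT : 0 < T) (lam β : ℝ) (hlam : 0 < lam) (hβ : 0 < β)
    (F : (Fin T → ℝ) → ℝ) (hFconv : ConvexOn ℝ Set.univ F)
    (hFdiff : Differentiable ℝ F)
    (hFsc : ∀ u v : Fin T → ℝ, ∀ t : ℝ, 0 ≤ t → t ≤ 1 →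
      F (t • u + (1 - t) • v) ≤ t * F u + (1 - t) * F v -
        (1 / (2 * (T : ℝ) * β)) * t * (1 - t) * ∑ i, (u i - v i) ^ 2)
    (K Khat : Matrix (Fin T) (Fin T) ℝ) (hK : K.PosSemidef)
    (hKhat : Khat.PosSemidef)
    (J Jhat : (Fin T → ℝ) → ℝ)
    (hJ : ∀ α, J α = F α + (1 / (2 * lam * (T : ℝ) ^ 2)) *
      dotProduct α (K.mulVec α))
    (hJhat : ∀ α, Jhat α = F α + (1 / (2 * lam * (T : ℝ) ^ 2)) *
      dotProduct α (Khat.mulVec α))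
    (αs : Fin T → ℝ) (hmin : ∀ α, J αs ≤ J α)
    (αh : Fin T → ℝ) (hminh : ∀ α, Jhat αh ≤ Jhat α)
    (Δ : Fin T → ℝ)
    (hΔ : Δ = (1 / (lam * (T : ℝ))) • ((Khat - K).mulVec αs)) :
    (1 / (lam ^ 2 * (T : ℝ) ^ 2)) *
        dotProduct (αh - αs) (Khat.mulVec (αh - αs)) ≤
      (2 * β / lam) * (⨆ t, |Δ t|) ^ 2 :=
  stmt15_general hT lam β hlam hβ F hFsc K Khat hK hKhat J Jhat hJ hJhat αs hmin αh hminh Δ hΔ
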